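/- arXiv:2006.05408 — 2 statements merged into one kernel-verified Lean document; each statement's English description precedes it below -/
import Mathlib

section
/- With the data fixed as in the context, for every 1 ≤ m ≤ 2n one has F(m) ≤ N^{ m + 1 − c(m) }, where c(m) is the number of blocks B of p∨q with max(B) ≤ m. In particular, |A^{(p,q)}| = F(2n) ≤ N^{ 2n + 1 − |p∨q| }. -/
open Filter

/-- `(k_s, l_s) = σ_s ∘ ε_s (i_s, j_s)`. -/
def klMap {n N : ℕ} (ε : Fin (2 * n) → Bool) (σ : Fin (2 * n) → Equiv.Perm (Fin N × Fin N))
    (x : (Fin (2 * n) → Fin N) × (Fin (2 * n) → Fin N)) (s : Fin (2 * n)) : Fin N × Fin N :=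
  if ε s then (σ s) (x.1 s, x.2 s) else (σ s) (x.2 s, x.1 s)

/-- The set `A^{(p,q)}` of tuples `(i_1, j_1, …, i_{2n}, j_{2n})` with `j_s = i_{s+1}`
(cyclically, so that `j_{2n} = i_1`), `k_s = k_{p(s)}` and `l_s = l_{q(s)}` for all `s`. -/
def tupleSet (n N : ℕ) (ε : Fin (2 * n) → Bool) (σ : Fin (2 * n) → Equiv.Perm (Fin N × Fin N))
    (p q : Equiv.Perm (Fin (2 * n))) :
    Finset ((Fin (2 * n) → Fin N) × (Fin (2 * n) → Fin N)) :=
  Finset.univ.filter fun x =>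
    (∀ s, x.2 s = x.1 (finRotate (2 * n) s)) ∧
    (∀ s, (klMap ε σ x s).1 = (klMap ε σ x (p s)).1) ∧
    (∀ s, (klMap ε σ x s).2 = (klMap ε σ x (q s)).2)

/-- `F(S)`:  the number of families `(i_s, j_s)_{s ∈ S}` that extend to an element of
`A^{(p,q)}`. -/
def Fcnt (n N : ℕ) (ε : Fin (2 * n) → Bool) (σ : Fin (2 * n) → Equiv.Perm (Fin N × Fin N))
    (p q : Equiv.Perm (Fin (2 * n))) (S : Finset (Fin (2 * n))) : ℕ :=
  ((tupleSet n N ε σ p q).image fun x => fun s : {a // a ∈ S} => (x.1 s.1, x.2 s.1)).card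

/-- The join `p ∨ q` of the two pair partitions, as an equivalence relation. -/
def joinRel {m : ℕ} (p q : Equiv.Perm (Fin m)) : Fin m → Fin m → Prop :=
  Relation.EqvGen fun a b => p a = b ∨ q a = b

/-- `|p ∨ q|`, the number of blocks of the join partition. -/
noncomputable def numBlocks {m : ℕ} (p q : Equiv.Perm (Fin m)) : ℕ :=
  Set.ncard {B : Set (Fin m) | ∃ a, B = {x | joinRel p q a x}}

/-- The set `{1, …, m}` of the paper, in `0`-based indexing: the first `m` indices. -/
def initSeg (n m : ℕ) : Finset (Fin (2 * n)) :=
  Finset.univ.filter fun s => (s : ℕ) < m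

/-!
Reveal the tuple one index at a time. Passing from the first `m` pairs `(i_s, j_s)` to the first
`m + 1`, the new `i` equals the previous `j`, so there are at most `N` extensions. If moreover the
block of `p ∨ q` containing the new index closes there, then `p` and `q` send that index to earlier
ones, so `k` and `l` at the new index are already known and `σ` pins the new pair down: no new
choice at all. Every closed block therefore saves one factor of `N`.
-/

namespace Finset

variable {α β γ δ : Type*} [DecidableEq β] [DecidableEq γ] {s : Finset α} {f : α → β} {g : α → γ}

theorem card_image_le_card_image_of_determined
    (h : ∀ x ∈ s, ∀ y ∈ s, g x = g y → f x = f y) : #(s.image f) ≤ #(s.image g) := by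
  classical
  set t := s.image fun x => (g x, f x)
  have hfst : Set.InjOn Prod.fst (t : Set (γ × β)) := by
    simp only [t, coe_image, Set.InjOn, Set.forall_mem_image]
    intro x hx y hy hxy
    exact Prod.ext hxy (h x hx y hy hxy)
  calc #(s.image f) = #(t.image Prod.snd) := by rw [image_image]; rfl
    _ ≤ #t := card_image_le
    _ = #(t.image Prod.fst) := (card_image_of_injOn hfst).symm
    _ = #(s.image g) := by rw [image_image]; rfl

theorem card_image_le_card_image_mul_of_determined [Fintype δ] [DecidableEq δ] (k : α → δ)
    (h : ∀ x ∈ s, ∀ y ∈ s, g x = g y → k x = k y → f x = f y) :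
    #(s.image f) ≤ #(s.image g) * Fintype.card δ := by
  calc #(s.image f) ≤ #(s.image fun x => (g x, k x)) :=
        card_image_le_card_image_of_determined fun x hx y hy hxy =>
          h x hx y hy (congrArg Prod.fst hxy) (congrArg Prod.snd hxy)
    _ ≤ #(s.image g ×ˢ (univ : Finset δ)) :=
        card_le_card fun _ hz => by
          obtain ⟨x, hx, rfl⟩ := mem_image.mp hz
          exact mem_product.mpr ⟨mem_image_of_mem g hx, mem_univ _⟩
    _ = #(s.image g) * Fintype.card δ := by rw [card_product, card_univ]

end Finset

section Blocks

variable {k m : ℕ} {r : Fin k → Fin k → Prop}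

/-- With `r = p ∨ q`, the `c(m)` blocks of the paper (0-based: all elements are `< m`). -/
def blocksBelow (r : Fin k → Fin k → Prop) (m : ℕ) : Set (Set (Fin k)) :=
  {B | (∃ a, B = {x | r a x}) ∧ ∀ x ∈ B, (x : ℕ) < m}

theorem blocksBelow_of_le (h : k ≤ m) : blocksBelow r m = {B | ∃ a, B = {x | r a x}} := by
  ext B
  simp only [blocksBelow, Set.mem_ofPred_eq, and_iff_left_iff_imp]
  exact fun _ x _ => x.isLt.trans_le h

theorem blocksBelow_one (hr : Equivalence r) (hne : ∀ a, ∃ b ≠ a, r a b) :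
    blocksBelow r 1 = ∅ := by
  refine Set.eq_empty_of_forall_notMem ?_
  rintro _ ⟨⟨a, rfl⟩, hlt⟩
  obtain ⟨b, hba, hab⟩ := hne a
  have ha := hlt a (hr.refl a)
  have hb := hlt b hab
  exact hba (Fin.ext (by omega))

theorem blocksBelow_succ_subset_insert (hr : Equivalence r) (hm : m < k) :
    blocksBelow r (m + 1) ⊆ insert {x | r ⟨m, hm⟩ x} (blocksBelow r m) := by
  rintro _ ⟨⟨a, rfl⟩, hlt⟩
  by_cases ham : r a ⟨m, hm⟩
  · left
    ext x
    exact ⟨hr.trans (hr.symm ham), hr.trans ham⟩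
  · refine Or.inr ⟨⟨a, rfl⟩, fun x hx => ?_⟩
    have := hlt x hx
    by_contra! hmx
    exact ham ((Fin.ext (show (x : ℕ) = m by omega) : x = ⟨m, hm⟩) ▸ hx)

theorem blocksBelow_succ_subset (hr : Equivalence r) {x₀ : Fin k} (hm : m < k)
    (hx₀ : r ⟨m, hm⟩ x₀) (hmx₀ : m < x₀) : blocksBelow r (m + 1) ⊆ blocksBelow r m := by
  rintro _ ⟨⟨a, rfl⟩, hlt⟩
  refine ⟨⟨a, rfl⟩, fun x hx => ?_⟩
  have := hlt x hx
  by_contra! hmx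
  have hax : r a ⟨m, hm⟩ := (Fin.ext (show (x : ℕ) = m by omega) : x = ⟨m, hm⟩) ▸ hx
  have := hlt x₀ (hr.trans hax hx₀)
  omega

theorem joinRel_equivalence (p q : Equiv.Perm (Fin k)) : Equivalence (joinRel p q) :=
  Relation.EqvGen.is_equivalence _

theorem joinRel_apply_left {p q : Equiv.Perm (Fin k)} (a : Fin k) : joinRel p q a (p a) :=
  Relation.EqvGen.rel _ _ (Or.inl rfl)

theorem joinRel_apply_right {p q : Equiv.Perm (Fin k)} (a : Fin k) : joinRel p q a (q a) :=
  Relation.EqvGen.rel _ _ (Or.inr rfl)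

end Blocks

theorem finRotate_mk {M t : ℕ} (h : t + 1 < M) : finRotate M ⟨t, by omega⟩ = ⟨t + 1, h⟩ := by
  obtain ⟨M, rfl⟩ : ∃ M', M = M' + 1 := ⟨M - 1, by omega⟩
  exact finRotate_of_lt (by omega)

section Counting

open Finset

variable {n N m : ℕ} {ε : Fin (2 * n) → Bool} {σ : Fin (2 * n) → Equiv.Perm (Fin N × Fin N)}
  {p q : Equiv.Perm (Fin (2 * n))} {x y : (Fin (2 * n) → Fin N) × (Fin (2 * n) → Fin N)}

def pairsOn (S : Finset (Fin (2 * n))) (x : (Fin (2 * n) → Fin N) × (Fin (2 * n) → Fin N)) :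
    {a // a ∈ S} → Fin N × Fin N :=
  fun s => (x.1 s.1, x.2 s.1)

theorem Fcnt_eq_card_image (S : Finset (Fin (2 * n))) :
    Fcnt n N ε σ p q S = #((tupleSet n N ε σ p q).image (pairsOn S)) :=
  rfl

theorem pairsOn_eq_pairsOn_iff {S : Finset (Fin (2 * n))} :
    pairsOn S x = pairsOn S y ↔ ∀ s ∈ S, (x.1 s, x.2 s) = (y.1 s, y.2 s) := by
  simp [pairsOn, funext_iff]

theorem mem_initSeg {s : Fin (2 * n)} : s ∈ initSeg n m ↔ (s : ℕ) < m := by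
  simp [initSeg]

theorem card_initSeg (hm : m ≤ 2 * n) : #(initSeg n m) = m := by
  rw [initSeg, Fin.card_filter_val_lt]
  omega

theorem forall_mem_initSeg_succ {P : Fin (2 * n) → Prop} (hm : m < 2 * n) :
    (∀ s ∈ initSeg n (m + 1), P s) ↔ (∀ s ∈ initSeg n m, P s) ∧ P ⟨m, hm⟩ := by
  simp only [mem_initSeg]
  refine ⟨fun h => ⟨fun s hs => h s (by omega), h _ (by simp)⟩, fun ⟨h, hlast⟩ s hs => ?_⟩
  rcases Nat.lt_succ_iff_lt_or_eq.mp hs with hs | hs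
  · exact h s hs
  · exact (Fin.ext hs : s = ⟨m, hm⟩) ▸ hlast

theorem Fcnt_le_pow (S : Finset (Fin (2 * n))) : Fcnt n N ε σ p q S ≤ N ^ (2 * #S) := by
  calc Fcnt n N ε σ p q S ≤ Fintype.card ({a // a ∈ S} → Fin N × Fin N) := card_le_univ _
    _ = N ^ (2 * #S) := by simp [pow_mul', sq, mul_pow]

theorem Fcnt_initSeg_two_mul : Fcnt n N ε σ p q (initSeg n (2 * n)) = #(tupleSet n N ε σ p q) := by
  rw [Fcnt_eq_card_image]
  refine card_image_of_injOn fun x _ y _ hxy => ?_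
  rw [pairsOn_eq_pairsOn_iff] at hxy
  have h s := hxy s (mem_initSeg.mpr s.isLt)
  exact Prod.ext (funext fun s => congrArg Prod.fst (h s)) (funext fun s => congrArg Prod.snd (h s))

theorem klMap_eq_klMap_iff {s : Fin (2 * n)} :
    klMap ε σ x s = klMap ε σ y s ↔ (x.1 s, x.2 s) = (y.1 s, y.2 s) := by
  unfold klMap
  cases ε s <;> simp [and_comm]

theorem mem_tupleSet :
    x ∈ tupleSet n N ε σ p q ↔
      (∀ s, x.2 s = x.1 (finRotate (2 * n) s)) ∧
      (∀ s, (klMap ε σ x s).1 = (klMap ε σ x (p s)).1) ∧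
      (∀ s, (klMap ε σ x s).2 = (klMap ε σ x (q s)).2) := by
  simp [tupleSet]

theorem fst_eq_snd_of_mem_tupleSet (hx : x ∈ tupleSet n N ε σ p q) {t : ℕ} (h : t + 1 < 2 * n) :
    x.1 ⟨t + 1, h⟩ = x.2 ⟨t, by omega⟩ := by
  rw [(mem_tupleSet.mp hx).1, finRotate_mk h]

theorem pair_eq_of_mem_tupleSet (hx : x ∈ tupleSet n N ε σ p q) (hy : y ∈ tupleSet n N ε σ p q)
    {s : Fin (2 * n)} (hp : klMap ε σ x (p s) = klMap ε σ y (p s))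
    (hq : klMap ε σ x (q s) = klMap ε σ y (q s)) : (x.1 s, x.2 s) = (y.1 s, y.2 s) := by
  obtain ⟨-, hxp, hxq⟩ := mem_tupleSet.mp hx
  obtain ⟨-, hyp, hyq⟩ := mem_tupleSet.mp hy
  rw [← klMap_eq_klMap_iff]
  exact Prod.ext (by rw [hxp, hyp, hp]) (by rw [hxq, hyq, hq])

theorem Fcnt_initSeg_succ_le_mul (hm1 : 1 ≤ m) (hm : m < 2 * n) :
    Fcnt n N ε σ p q (initSeg n (m + 1)) ≤ Fcnt n N ε σ p q (initSeg n m) * N := by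
  have h := card_image_le_card_image_mul_of_determined (s := tupleSet n N ε σ p q)
    (f := pairsOn (initSeg n (m + 1))) (g := pairsOn (initSeg n m)) (fun x => x.2 ⟨m, hm⟩)
    fun x hx y hy hxy hj => by
      rw [pairsOn_eq_pairsOn_iff] at hxy ⊢
      rw [forall_mem_initSeg_succ hm]
      refine ⟨hxy, Prod.ext ?_ hj⟩
      obtain ⟨t, rfl⟩ : ∃ t, m = t + 1 := ⟨m - 1, by omega⟩
      rw [fst_eq_snd_of_mem_tupleSet hx hm, fst_eq_snd_of_mem_tupleSet hy hm]
      exact congrArg Prod.snd (hxy _ (mem_initSeg.mpr (Nat.lt_succ_self t)))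
  simpa [Fcnt_eq_card_image] using h

theorem Fcnt_initSeg_succ_le (hm : m < 2 * n) (hpm : (p ⟨m, hm⟩ : ℕ) < m)
    (hqm : (q ⟨m, hm⟩ : ℕ) < m) :
    Fcnt n N ε σ p q (initSeg n (m + 1)) ≤ Fcnt n N ε σ p q (initSeg n m) := by
  rw [Fcnt_eq_card_image, Fcnt_eq_card_image]
  refine card_image_le_card_image_of_determined fun x hx y hy hxy => ?_
  rw [pairsOn_eq_pairsOn_iff] at hxy ⊢
  rw [forall_mem_initSeg_succ hm]
  refine ⟨hxy, pair_eq_of_mem_tupleSet hx hy ?_ ?_⟩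
  · exact klMap_eq_klMap_iff.mpr (hxy _ (mem_initSeg.mpr hpm))
  · exact klMap_eq_klMap_iff.mpr (hxy _ (mem_initSeg.mpr hqm))

theorem Fcnt_succ_mul_pow_le (hN : 1 ≤ N) (hpf : ∀ s, p s ≠ s) (hqf : ∀ s, q s ≠ s)
    (hm1 : 1 ≤ m) (hm : m < 2 * n) :
    Fcnt n N ε σ p q (initSeg n (m + 1)) * N ^ (blocksBelow (joinRel p q) (m + 1)).ncard ≤
      N * (Fcnt n N ε σ p q (initSeg n m) * N ^ (blocksBelow (joinRel p q) m).ncard) := by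
  by_cases hopen : ∃ x, joinRel p q ⟨m, hm⟩ x ∧ m < (x : ℕ)
  · obtain ⟨x₀, hx₀, hmx₀⟩ := hopen
    have hF := Fcnt_initSeg_succ_le_mul (ε := ε) (σ := σ) (p := p) (q := q) hm1 hm
    have hc := Set.ncard_le_ncard (blocksBelow_succ_subset (joinRel_equivalence p q) hm hx₀ hmx₀)
    calc _ ≤ Fcnt n N ε σ p q (initSeg n m) * N * N ^ (blocksBelow (joinRel p q) m).ncard :=
          Nat.mul_le_mul hF (Nat.pow_le_pow_right hN hc)
      _ = _ := by ring
  · push Not at hopen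
    have hlt {s} (hs : joinRel p q ⟨m, hm⟩ s) (hne : s ≠ ⟨m, hm⟩) : (s : ℕ) < m :=
      (hopen s hs).lt_of_ne fun h => hne (Fin.ext h)
    have hF := Fcnt_initSeg_succ_le (ε := ε) (σ := σ) hm
      (hlt (joinRel_apply_left _) (hpf _)) (hlt (joinRel_apply_right _) (hqf _))
    have hc := (Set.ncard_le_ncard
      (blocksBelow_succ_subset_insert (joinRel_equivalence p q) hm)).trans (Set.ncard_insert_le _ _)
    calc _ ≤ Fcnt n N ε σ p q (initSeg n m) * N ^ ((blocksBelow (joinRel p q) m).ncard + 1) :=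
          Nat.mul_le_mul hF (Nat.pow_le_pow_right hN hc)
      _ = _ := by ring

theorem Fcnt_initSeg_mul_pow_le (hN : 1 ≤ N) (hpf : ∀ s, p s ≠ s) (hqf : ∀ s, q s ≠ s)
    (hm1 : 1 ≤ m) (hm : m ≤ 2 * n) :
    Fcnt n N ε σ p q (initSeg n m) * N ^ (blocksBelow (joinRel p q) m).ncard ≤ N ^ (m + 1) := by
  induction m, hm1 using Nat.le_induction with
  | base =>
    rw [blocksBelow_one (joinRel_equivalence p q) fun a => ⟨p a, hpf a, joinRel_apply_left a⟩,
      Set.ncard_empty, pow_zero, mul_one]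
    simpa [card_initSeg hm] using Fcnt_le_pow (ε := ε) (σ := σ) (p := p) (q := q) (initSeg n 1)
  | succ m hm1 ih =>
    calc _ ≤ N * (Fcnt n N ε σ p q (initSeg n m) * N ^ (blocksBelow (joinRel p q) m).ncard) :=
          Fcnt_succ_mul_pow_le hN hpf hqf hm1 hm
      _ ≤ N * N ^ (m + 1) := Nat.mul_le_mul_left N (ih (by omega))
      _ = N ^ (m + 1 + 1) := (pow_succ' N (m + 1)).symm

end Counting

theorem stmt9_general (n N : ℕ) (hn : 1 ≤ n) (hN : 1 ≤ N)
    (ε : Fin (2 * n) → Bool) (σ : Fin (2 * n) → Equiv.Perm (Fin N × Fin N))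
    (p q : Equiv.Perm (Fin (2 * n)))
    (hpf : ∀ s, p s ≠ s) (hqf : ∀ s, q s ≠ s) :
    (∀ m : ℕ, 1 ≤ m → m ≤ 2 * n →
      Fcnt n N ε σ p q (initSeg n m) *
          N ^ (Set.ncard {B : Set (Fin (2 * n)) | (∃ a, B = {x | joinRel p q a x}) ∧
            ∀ x ∈ B, (x : ℕ) < m}) ≤ N ^ (m + 1)) ∧
    (tupleSet n N ε σ p q).card * N ^ numBlocks p q ≤ N ^ (2 * n + 1) := by
  refine ⟨fun m hm1 hm => Fcnt_initSeg_mul_pow_le hN hpf hqf hm1 hm, ?_⟩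
  have h := Fcnt_initSeg_mul_pow_le (ε := ε) (σ := σ) hN hpf hqf (m := 2 * n) (by omega) le_rfl
  rwa [Fcnt_initSeg_two_mul, blocksBelow_of_le le_rfl] at h

/-- `F(m) ≤ N^{m + 1 - c(m)}` where `c(m)` is the number of blocks `B` of `p ∨ q` with
`max B ≤ m`; in particular `|A^{(p,q)}| = F(2n) ≤ N^{2n + 1 - |p∨q|}` (both stated
multiplicatively). -/
theorem stmt9 (n N : ℕ) (hn : 1 ≤ n) (hN : 1 ≤ N)
    (ε : Fin (2 * n) → Bool) (σ : Fin (2 * n) → Equiv.Perm (Fin N × Fin N))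
    (p q : Equiv.Perm (Fin (2 * n)))
    (hp : Function.Involutive p) (hq : Function.Involutive q)
    (hpf : ∀ s, p s ≠ s) (hqf : ∀ s, q s ≠ s)
    (hpε : ∀ s, ε (p s) ≠ ε s) (hqε : ∀ s, ε (q s) ≠ ε s) :
    (∀ m : ℕ, 1 ≤ m → m ≤ 2 * n →
      Fcnt n N ε σ p q (initSeg n m) *
          N ^ (Set.ncard {B : Set (Fin (2 * n)) | (∃ a, B = {x | joinRel p q a x}) ∧
            ∀ x ∈ B, (x : ℕ) < m}) ≤ N ^ (m + 1)) ∧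
    (tupleSet n N ε σ p q).card * N ^ numBlocks p q ≤ N ^ (2 * n + 1) :=
  stmt9_general n N hn hN ε σ p q hpf hqf
end

section
/- Let (𝔖¹_N)_{N≥1} and (𝔖²_N)_{N≥1} be two independent sequences of independent random permutations, with 𝔖¹_N and 𝔖²_N each uniformly distributed on the symmetric group of [N]×[N] (i.e. on the probability space ∏_{N≥1} (S([N]²) × S([N]²)) with the product of uniform measures). Then, almost surely as N → ∞, X_N(𝔖¹_N, 𝔖²_N)/N² → 0 and Y_N(𝔖¹_N, 𝔖²_N)/N³ → 0; i.e. almost every realization of the pair of sequences satisfies condition (C3). -/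
open MeasureTheory Filter

instance permMS (N : ℕ) : MeasurableSpace (Equiv.Perm (Fin N × Fin N)) := ⊤

/-- `X_N(σ,τ)`. -/
def Xcnt (N : ℕ) (σ τ : Equiv.Perm (Fin N × Fin N)) : ℕ :=
  (Finset.univ.filter fun x : Fin N × Fin N × Fin N =>
    σ (x.1, x.2.1) = τ (x.1, x.2.2) ∨ σ (x.1, x.2.1) = τ (x.2.2, x.2.1)).card

/-- `Y_N(σ,τ)`. -/
def Ycnt (N : ℕ) (σ τ : Equiv.Perm (Fin N × Fin N)) : ℕ :=
  (Finset.univ.filter fun x : Fin N × Fin N × Fin N =>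
    (σ (x.1, x.2.1)).1 = (τ (x.1, x.2.2)).1 ∨ (σ (x.1, x.2.1)).1 = (τ (x.2.2, x.2.1)).1).card +
  (Finset.univ.filter fun x : Fin N × Fin N × Fin N =>
    (σ (x.1, x.2.1)).2 = (τ (x.1, x.2.2)).2 ∨ (σ (x.1, x.2.1)).2 = (τ (x.2.2, x.2.1)).2).card

/-!
Write `X_N`, and each of the two halves of `Y_N`, as at most two counts of the form
`#{t | τ (b t) ∈ A t}` over the `N³` triples `t`, where `A t` depends only on `σ`. For a uniform
permutation `τ` of the `n = N²` cells, `τ x ∈ A` has probability `|A| / n`, and for `x ≠ x'` the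
pair `(τ x, τ x')` is uniform on pairs of distinct cells, so both `τ x ∈ A` and `τ x' ∈ A'` have
probability at most `2 |A| |A'| / n²`. Only `N⁴` of the `N⁶` pairs of triples have the same
`b`-value, which gives `E[X_N²] ≤ 12 N²` and `E[Y_N²] ≤ 48 N⁴`. Hence
`∑ N, E[(X_N / N²)² + (Y_N / N³)²] < ∞`, so almost surely the series
`∑ N, (X_N / N²)² + (Y_N / N³)²` converges and its terms tend to `0`.
-/

open Finset Topology Equiv
open scoped Nat

section GroupAction

variable {G X : Type*} [Group G] [Fintype G] [MulAction G X] [DecidableEq X]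

theorem card_filter_smul_eq_smul_eq (x : X) (h : G) :
    #{g : G | g • x = h • x} = #{g : G | g • x = x} := by
  refine card_nbij' (h⁻¹ * ·) (h * ·) ?_ ?_ ?_ ?_ <;> intro g <;> simp [mul_smul, inv_smul_eq_iff]

theorem card_filter_smul_eq_mul_card_le (x y : X) {O : Finset X}
    (hO : ∀ z ∈ O, ∃ g : G, g • x = z) :
    #{g : G | g • x = y} * #O ≤ Fintype.card G := by
  by_cases hy : ∃ h : G, h • x = y
  · obtain ⟨h, rfl⟩ := hy
    calc #{g : G | g • x = h • x} * #O = ∑ z ∈ O, #{g : G | g • x = z} := by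
          rw [mul_comm, ← smul_eq_mul, ← sum_const]
          refine sum_congr rfl fun z hz => ?_
          obtain ⟨k, rfl⟩ := hO z hz
          rw [card_filter_smul_eq_smul_eq, card_filter_smul_eq_smul_eq]
      _ = #{g : G | g • x ∈ O} := sum_card_fiberwise_eq_card_filter _ _ _
      _ ≤ Fintype.card G := card_le_univ _
  · simp only [not_exists] at hy
    simp [hy]

theorem card_filter_smul_mem_mul_card_le (x : X) (S : Finset X) {O : Finset X}
    (hO : ∀ z ∈ O, ∃ g : G, g • x = z) :
    #{g : G | g • x ∈ S} * #O ≤ #S * Fintype.card G := by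
  rw [← sum_card_fiberwise_eq_card_filter, sum_mul, ← smul_eq_mul]
  exact sum_le_card_nsmul _ _ _ fun y _ => card_filter_smul_eq_mul_card_le x y hO

end GroupAction

namespace Equiv.Perm

variable {α : Type*} [Fintype α] [DecidableEq α]

theorem card_filter_apply_mem_mul_le (a : α) (S : Finset α) :
    #{τ : Perm α | τ a ∈ S} * Fintype.card α ≤ #S * (Fintype.card α)! := by
  simpa [Fintype.card_perm] using card_filter_smul_mem_mul_card_le (G := Perm α) a S
    (O := univ) fun b _ => MulAction.exists_smul_eq (Perm α) a b

theorem card_filter_apply_mem_and_apply_mem_mul_le {a a' : α} (ha : a ≠ a')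
    (S S' : Finset α) :
    #{τ : Perm α | τ a ∈ S ∧ τ a' ∈ S'} * (Fintype.card α * (Fintype.card α - 1))
      ≤ #S * #S' * (Fintype.card α)! := by
  have := card_filter_smul_mem_mul_card_le (G := Perm α) (a, a') (S ×ˢ S') (O := univ.offDiag)
    fun z hz => by
      obtain ⟨g, hg, hg'⟩ := MulAction.is_two_pretransitive_iff.1
        (isMultiplyPretransitive α 2) ha (mem_offDiag.1 hz).2.2
      exact ⟨g, by simp [hg, hg']⟩
  simpa [offDiag_card, card_product, Fintype.card_perm, Nat.mul_sub_one] using this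

theorem card_filter_apply_mem_and_apply_mem_mul_sq_le (a a' : α) {S S' : Finset α} {s : ℕ}
    (hS : #S ≤ s) (hS' : #S' ≤ s) :
    #{τ : Perm α | τ a ∈ S ∧ τ a' ∈ S'} * Fintype.card α ^ 2
      ≤ if a = a' then s * Fintype.card α * (Fintype.card α)!
        else 2 * s ^ 2 * (Fintype.card α)! := by
  set n := Fintype.card α
  split_ifs with h
  · subst h
    have hsub : #{τ : Perm α | τ a ∈ S ∧ τ a ∈ S'} ≤ #{τ : Perm α | τ a ∈ S} :=
      card_le_card fun τ hτ => by simp only [mem_filter] at hτ ⊢; exact ⟨hτ.1, hτ.2.1⟩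
    calc #{τ : Perm α | τ a ∈ S ∧ τ a ∈ S'} * n ^ 2 ≤ #{τ : Perm α | τ a ∈ S} * n * n := by
          rw [sq, ← mul_assoc]; gcongr
      _ ≤ #S * n ! * n := Nat.mul_le_mul_right _ (card_filter_apply_mem_mul_le a S)
      _ ≤ s * n * n ! := by rw [mul_right_comm]; gcongr
  · have hn : n ^ 2 ≤ 2 * (n * (n - 1)) := by
      obtain ⟨k, hk⟩ : ∃ k, n = k + 2 :=
        ⟨n - 2, by have := Fintype.one_lt_card_iff.2 ⟨a, a', h⟩; omega⟩
      rw [hk, show k + 2 - 1 = k + 1 by omega]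
      nlinarith
    calc #{τ : Perm α | τ a ∈ S ∧ τ a' ∈ S'} * n ^ 2
        ≤ 2 * (#{τ : Perm α | τ a ∈ S ∧ τ a' ∈ S'} * (n * (n - 1))) := by
          rw [mul_left_comm]; gcongr
      _ ≤ 2 * (#S * #S' * n !) :=
          Nat.mul_le_mul_left 2 (card_filter_apply_mem_and_apply_mem_mul_le h S S')
      _ ≤ 2 * s ^ 2 * n ! := by rw [sq, ← mul_assoc]; gcongr

theorem sum_card_filter_apply_mem_sq_mul_le {T : Type*} [Fintype T] (b : T → α)
    (A : T → Finset α) {m s : ℕ} (hb : ∀ x, #{t | b t = x} ≤ m) (hA : ∀ t, #(A t) ≤ s) :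
    (∑ τ : Perm α, #{t | τ (b t) ∈ A t} ^ 2) * Fintype.card α ^ 2
      ≤ Fintype.card T * (m * (s * Fintype.card α * (Fintype.card α)!)
          + Fintype.card T * (2 * s ^ 2 * (Fintype.card α)!)) := by
  set n := Fintype.card α
  have hsq (τ : Perm α) : #{t | τ (b t) ∈ A t} ^ 2
      = #{p : T × T | τ (b p.1) ∈ A p.1 ∧ τ (b p.2) ∈ A p.2} := by
    rw [sq, ← card_product, ← filter_product, univ_product_univ]
  have hrow (t : T) : ∑ t', (if b t = b t' then s * n * n ! else 2 * s ^ 2 * n !)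
      ≤ m * (s * n * n !) + Fintype.card T * (2 * s ^ 2 * n !) := by
    calc ∑ t', (if b t = b t' then s * n * n ! else 2 * s ^ 2 * n !)
        ≤ ∑ t', ((if b t' = b t then s * n * n ! else 0) + 2 * s ^ 2 * n !) := by
          gcongr with t'
          split_ifs <;> simp_all
      _ ≤ m * (s * n * n !) + Fintype.card T * (2 * s ^ 2 * n !) := by
          rw [sum_add_distrib, ← sum_filter, sum_const, sum_const, Finset.card_univ,
            smul_eq_mul, smul_eq_mul]
          gcongr
          exact hb _
  calc (∑ τ : Perm α, #{t | τ (b t) ∈ A t} ^ 2) * n ^ 2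
      = (∑ τ : Perm α, #{p : T × T | τ (b p.1) ∈ A p.1 ∧ τ (b p.2) ∈ A p.2}) * n ^ 2 := by
        simp only [hsq]
    _ = ∑ p : T × T, #{τ : Perm α | τ (b p.1) ∈ A p.1 ∧ τ (b p.2) ∈ A p.2} * n ^ 2 := by
        simp only [card_filter, sum_mul]
        exact sum_comm
    _ ≤ ∑ p : T × T, (if b p.1 = b p.2 then s * n * n ! else 2 * s ^ 2 * n !) :=
        sum_le_sum fun p _ => card_filter_apply_mem_and_apply_mem_mul_sq_le _ _ (hA _) (hA _)
    _ = ∑ t, ∑ t', (if b t = b t' then s * n * n ! else 2 * s ^ 2 * n !) :=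
        Fintype.sum_prod_type _
    _ ≤ ∑ _t : T, (m * (s * n * n !) + Fintype.card T * (2 * s ^ 2 * n !)) :=
        sum_le_sum fun t _ => hrow t
    _ = _ := by simp

end Equiv.Perm

theorem card_filter_eq_le_card_of_injective {β γ δ : Type*} [Fintype β] [Fintype δ]
    [DecidableEq γ] {g : β → γ} (h : β → δ) (hgh : Function.Injective fun x => (g x, h x))
    (c : γ) : #{x | g x = c} ≤ Fintype.card δ := by
  rw [← card_univ]
  refine card_le_card_of_injOn h (fun _ _ => mem_univ _) fun x hx y hy hxy => hgh ?_
  simp only [mem_coe, mem_filter, mem_univ, true_and] at hx hy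
  simp only [hx, hy, Prod.mk.injEq, true_and]
  exact hxy

section MatchCount

variable {N : ℕ}

def matchCount (R : Fin N × Fin N → Finset (Fin N × Fin N)) (σ τ : Perm (Fin N × Fin N)) : ℕ :=
  #{x : Fin N × Fin N × Fin N |
    τ (x.1, x.2.2) ∈ R (σ (x.1, x.2.1)) ∨ τ (x.2.2, x.2.1) ∈ R (σ (x.1, x.2.1))}

theorem sum_card_filter_apply_mem_sq_le {b : Fin N × Fin N × Fin N → Fin N × Fin N}
    (hb : ∀ x, #{t | b t = x} ≤ N) {A : Fin N × Fin N × Fin N → Finset (Fin N × Fin N)} {s : ℕ}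
    (hA : ∀ t, #(A t) ≤ s) :
    ∑ τ : Perm (Fin N × Fin N), #{t | τ (b t) ∈ A t} ^ 2
      ≤ 3 * s ^ 2 * N ^ 2 * Fintype.card (Perm (Fin N × Fin N)) := by
  rcases N.eq_zero_or_pos with rfl | hN
  · simp
  have key := Perm.sum_card_filter_apply_mem_sq_mul_le b A hb hA
  rw [← Fintype.card_perm] at key
  simp only [Fintype.card_prod, Fintype.card_fin] at key
  refine Nat.le_of_mul_le_mul_right (key.trans ?_) (by positivity : 0 < (N * N) ^ 2)
  have : s ≤ s ^ 2 := Nat.le_self_pow two_ne_zero s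
  calc N * (N * N) * (N * (s * (N * N) * Fintype.card (Perm (Fin N × Fin N)))
        + N * (N * N) * (2 * s ^ 2 * Fintype.card (Perm (Fin N × Fin N))))
      = (s + 2 * s ^ 2) * N ^ 2 * Fintype.card (Perm (Fin N × Fin N)) * (N * N) ^ 2 := by ring
    _ ≤ 3 * s ^ 2 * N ^ 2 * Fintype.card (Perm (Fin N × Fin N)) * (N * N) ^ 2 := by
        gcongr; linarith

theorem sum_matchCount_sq_le {R : Fin N × Fin N → Finset (Fin N × Fin N)} {s : ℕ}
    (hR : ∀ v, #(R v) ≤ s) :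
    ∑ p : Perm (Fin N × Fin N) × Perm (Fin N × Fin N), matchCount R p.1 p.2 ^ 2
      ≤ 12 * s ^ 2 * N ^ 2 * Fintype.card (Perm (Fin N × Fin N) × Perm (Fin N × Fin N)) := by
  set K := Fintype.card (Perm (Fin N × Fin N))
  have hb₁ := card_filter_eq_le_card_of_injective (g := fun t : Fin N × Fin N × Fin N =>
    (t.1, t.2.2)) (·.2.1) (fun ⟨_, _, _⟩ ⟨_, _, _⟩ h => by simp_all)
  have hb₂ := card_filter_eq_le_card_of_injective (g := fun t : Fin N × Fin N × Fin N =>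
    (t.2.2, t.2.1)) (·.1) (fun ⟨_, _, _⟩ ⟨_, _, _⟩ h => by simp_all)
  simp only [Fintype.card_fin] at hb₁ hb₂
  have hsplit (σ τ : Perm (Fin N × Fin N)) : matchCount R σ τ
      ≤ #{t : Fin N × Fin N × Fin N | τ (t.1, t.2.2) ∈ R (σ (t.1, t.2.1))}
        + #{t : Fin N × Fin N × Fin N | τ (t.2.2, t.2.1) ∈ R (σ (t.1, t.2.1))} := by
    rw [matchCount, filter_or]
    exact card_union_le _ _
  have hσ (σ : Perm (Fin N × Fin N)) :
      ∑ τ : Perm (Fin N × Fin N), matchCount R σ τ ^ 2 ≤ 12 * s ^ 2 * N ^ 2 * K :=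
    calc ∑ τ : Perm (Fin N × Fin N), matchCount R σ τ ^ 2
        ≤ ∑ τ : Perm (Fin N × Fin N),
            2 * (#{t : Fin N × Fin N × Fin N | τ (t.1, t.2.2) ∈ R (σ (t.1, t.2.1))} ^ 2
              + #{t : Fin N × Fin N × Fin N | τ (t.2.2, t.2.1) ∈ R (σ (t.1, t.2.1))} ^ 2) :=
          sum_le_sum fun τ _ => (Nat.pow_le_pow_left (hsplit σ τ) 2).trans add_sq_le
      _ ≤ 2 * (3 * s ^ 2 * N ^ 2 * K + 3 * s ^ 2 * N ^ 2 * K) := by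
          rw [← mul_sum, sum_add_distrib]
          gcongr
          · exact sum_card_filter_apply_mem_sq_le hb₁ fun _ => hR _
          · exact sum_card_filter_apply_mem_sq_le hb₂ fun _ => hR _
      _ = 12 * s ^ 2 * N ^ 2 * K := by ring
  calc ∑ p : Perm (Fin N × Fin N) × Perm (Fin N × Fin N), matchCount R p.1 p.2 ^ 2
      = ∑ σ : Perm (Fin N × Fin N), ∑ τ : Perm (Fin N × Fin N), matchCount R σ τ ^ 2 :=
        Fintype.sum_prod_type _
    _ ≤ ∑ _σ : Perm (Fin N × Fin N), 12 * s ^ 2 * N ^ 2 * K := sum_le_sum fun σ _ => hσ σ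
    _ = 12 * s ^ 2 * N ^ 2 * Fintype.card (Perm (Fin N × Fin N) × Perm (Fin N × Fin N)) := by
        simp [K, Fintype.card_prod]; ring

theorem Xcnt_eq_matchCount (σ τ : Perm (Fin N × Fin N)) :
    Xcnt N σ τ = matchCount (fun v => {v}) σ τ := by
  simp only [Xcnt, matchCount, mem_singleton, eq_comm]

theorem Ycnt_eq_matchCount_add_matchCount (σ τ : Perm (Fin N × Fin N)) :
    Ycnt N σ τ = matchCount (fun v => {w | w.1 = v.1}) σ τ
      + matchCount (fun v => {w | w.2 = v.2}) σ τ := by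
  simp only [Ycnt, matchCount, mem_filter, mem_univ, true_and, eq_comm]

theorem sum_Xcnt_sq_le (N : ℕ) :
    ∑ p : Perm (Fin N × Fin N) × Perm (Fin N × Fin N), Xcnt N p.1 p.2 ^ 2
      ≤ 12 * N ^ 2 * Fintype.card (Perm (Fin N × Fin N) × Perm (Fin N × Fin N)) := by
  simpa [Xcnt_eq_matchCount] using sum_matchCount_sq_le (s := 1) fun v => (card_singleton v).le

theorem sum_Ycnt_sq_le (N : ℕ) :
    ∑ p : Perm (Fin N × Fin N) × Perm (Fin N × Fin N), Ycnt N p.1 p.2 ^ 2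
      ≤ 48 * N ^ 4 * Fintype.card (Perm (Fin N × Fin N) × Perm (Fin N × Fin N)) := by
  have hrow := sum_matchCount_sq_le (R := fun v => {w | w.1 = v.1}) fun v =>
    (card_filter_eq_le_card_of_injective Prod.snd (fun _ _ => id) v.1).trans_eq (Fintype.card_fin N)
  have hcol := sum_matchCount_sq_le (R := fun v => {w | w.2 = v.2}) fun v =>
    (card_filter_eq_le_card_of_injective Prod.fst Prod.swap_injective v.2).trans_eq
      (Fintype.card_fin N)
  calc ∑ p : Perm (Fin N × Fin N) × Perm (Fin N × Fin N), Ycnt N p.1 p.2 ^ 2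
      ≤ ∑ p : Perm (Fin N × Fin N) × Perm (Fin N × Fin N),
          2 * (matchCount (fun v => {w | w.1 = v.1}) p.1 p.2 ^ 2
            + matchCount (fun v => {w | w.2 = v.2}) p.1 p.2 ^ 2) := by
        simp only [Ycnt_eq_matchCount_add_matchCount]
        exact sum_le_sum fun p _ => add_sq_le
    _ ≤ 2 * (12 * N ^ 2 * N ^ 2 * Fintype.card (Perm (Fin N × Fin N) × Perm (Fin N × Fin N))
          + 12 * N ^ 2 * N ^ 2 * Fintype.card (Perm (Fin N × Fin N) × Perm (Fin N × Fin N))) := by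
        rw [← mul_sum, sum_add_distrib]
        gcongr
    _ = 48 * N ^ 4 * Fintype.card (Perm (Fin N × Fin N) × Perm (Fin N × Fin N)) := by ring

end MatchCount

theorem sum_div_pow_sq_le {ι : Type*} [Fintype ι] {g : ι → ℕ} {N k c : ℕ}
    (h : ∑ x, g x ^ 2 ≤ c * N ^ (2 * k) * Fintype.card ι) :
    ∑ x, ((g x : ℝ) / N ^ (k + 1)) ^ 2 ≤ c / N ^ 2 * Fintype.card ι := by
  rcases N.eq_zero_or_pos with rfl | hN
  · simp
  have hR : ((∑ x, g x ^ 2 : ℕ) : ℝ) ≤ c * N ^ (2 * k) * Fintype.card ι := by exact_mod_cast h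
  push_cast at hR
  simp only [div_pow, ← sum_div]
  rw [div_le_iff₀ (by positivity)]
  calc _ ≤ _ := hR
    _ = _ := by field_simp; ring

theorem PMF.integral_uniformOfFintype {Ω : Type*} [Fintype Ω] [Nonempty Ω] [MeasurableSpace Ω]
    [MeasurableSingletonClass Ω] (f : Ω → ℝ) :
    ∫ x, f x ∂(PMF.uniformOfFintype Ω).toMeasure = (∑ x, f x) / Fintype.card Ω := by
  simp [PMF.integral_eq_sum, PMF.uniformOfFintype_apply, div_eq_inv_mul, mul_sum]

theorem PMF.toMeasure_uniformOfFintype_prod {α β : Type*} [Fintype α] [Nonempty α]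
    [MeasurableSpace α] [MeasurableSingletonClass α] [Fintype β] [Nonempty β]
    [MeasurableSpace β] [MeasurableSingletonClass β] :
    (uniformOfFintype α).toMeasure.prod (uniformOfFintype β).toMeasure
      = (uniformOfFintype (α × β)).toMeasure := by
  refine Measure.ext_iff_singleton.2 fun p => ?_
  rw [← Set.singleton_prod_singleton, Measure.prod_prod, Set.singleton_prod_singleton]
  simp only [PMF.toMeasure_apply_singleton _ _ (measurableSet_singleton _),
    uniformOfFintype_apply, Fintype.card_prod, Nat.cast_mul]
  rw [ENNReal.mul_inv (by simp) (by simp)]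

theorem ae_tendsto_zero_of_summable_integral_sq {Ω : Type*} [MeasurableSpace Ω]
    {μ : Measure Ω} {u : ℕ → Ω → ℝ} (hu : ∀ N, Integrable (fun ω => u N ω ^ 2) μ)
    (h : Summable fun N => ∫ ω, u N ω ^ 2 ∂μ) :
    ∀ᵐ ω ∂μ, Tendsto (fun N => u N ω) atTop (𝓝 0) := by
  have hmeas (N : ℕ) : AEMeasurable (fun ω => ENNReal.ofReal (u N ω ^ 2)) μ :=
    (hu N).aemeasurable.ennreal_ofReal
  have hfin : ∫⁻ ω, ∑' N, ENNReal.ofReal (u N ω ^ 2) ∂μ ≠ ⊤ := by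
    rw [lintegral_tsum hmeas]
    simp_rw [← ofReal_integral_eq_lintegral_ofReal (hu _) (ae_of_all _ fun ω => sq_nonneg _)]
    rw [← ENNReal.ofReal_tsum_of_nonneg (fun N => integral_nonneg fun ω => sq_nonneg _) h]
    exact ENNReal.ofReal_ne_top
  filter_upwards [ae_lt_top' (AEMeasurable.tsum hmeas) hfin] with ω hω
  have hsq : Tendsto (fun N => u N ω ^ 2) atTop (𝓝 0) := by
    simpa [ENNReal.toReal_ofReal (sq_nonneg _)] using
      (ENNReal.summable_toReal hω.ne).tendsto_atTop_zero
  have habs := hsq.sqrt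
  simp only [Real.sqrt_sq_eq_abs, Real.sqrt_zero] at habs
  exact (tendsto_zero_iff_abs_tendsto_zero _).2 habs

theorem ae_tendsto_zero_of_sum_sq_le {Ω : Type*} [MeasurableSpace Ω] {P : Measure Ω}
    {ι : ℕ → Type*} [∀ N, Fintype (ι N)] [∀ N, Nonempty (ι N)] [∀ N, MeasurableSpace (ι N)]
    [∀ N, MeasurableSingletonClass (ι N)] {Z : ∀ N, Ω → ι N} (hZ : ∀ N, Measurable (Z N))
    (hlaw : ∀ N, P.map (Z N) = (PMF.uniformOfFintype (ι N)).toMeasure) (f : ∀ N, ι N → ℝ)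
    {C : ℝ} (hf : ∀ N : ℕ, ∑ x, f N x ^ 2 ≤ C / N ^ 2 * Fintype.card (ι N)) :
    ∀ᵐ ω ∂P, Tendsto (fun N => f N (Z N ω)) atTop (𝓝 0) := by
  have hmeas (N : ℕ) : AEStronglyMeasurable (fun x => f N x ^ 2) (P.map (Z N)) :=
    (measurable_of_countable _).aestronglyMeasurable
  refine ae_tendsto_zero_of_summable_integral_sq (fun N => ?_) ?_
  · refine (integrable_map_measure (hmeas N) (hZ N).aemeasurable).1 ?_
    rw [hlaw N]
    exact .of_finite
  · refine .of_nonneg_of_le (fun N => integral_nonneg fun ω => sq_nonneg _) (fun N => ?_)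
      ((Real.summable_one_div_nat_pow.2 one_lt_two).mul_left C)
    rw [← integral_map (hZ N).aemeasurable (hmeas N), hlaw N, PMF.integral_uniformOfFintype,
      div_le_iff₀ (by simp [Fintype.card_pos]), ← div_eq_mul_one_div]
    exact hf N

theorem stmt19_general
    (P : Measure ((N : ℕ) → Equiv.Perm (Fin N × Fin N) × Equiv.Perm (Fin N × Fin N)))
    (hlaw : ∀ N : ℕ, P.map (fun ω => ω N) =
      ((PMF.uniformOfFintype (Equiv.Perm (Fin N × Fin N))).toMeasure).prod
        ((PMF.uniformOfFintype (Equiv.Perm (Fin N × Fin N))).toMeasure)) :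
    ∀ᵐ ω ∂P,
      Tendsto (fun N : ℕ => (Xcnt N (ω N).1 (ω N).2 : ℝ) / (N : ℝ) ^ 2) atTop (nhds 0) ∧
      Tendsto (fun N : ℕ => (Ycnt N (ω N).1 (ω N).2 : ℝ) / (N : ℝ) ^ 3) atTop (nhds 0) := by
  have hunif (N : ℕ) : P.map (fun ω => ω N) = (PMF.uniformOfFintype _).toMeasure :=
    (hlaw N).trans PMF.toMeasure_uniformOfFintype_prod
  exact (ae_tendsto_zero_of_sum_sq_le (fun N => measurable_pi_apply N) hunif _
      fun N => sum_div_pow_sq_le (k := 1) (sum_Xcnt_sq_le N)).and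
    (ae_tendsto_zero_of_sum_sq_le (fun N => measurable_pi_apply N) hunif _
      fun N => sum_div_pow_sq_le (k := 2) (sum_Ycnt_sq_le N))

/-- `P` is the product, over `N`, of uniform probability measures on `S([N]²) × S([N]²)`: a
probability measure on `∏_N (S([N]²) × S([N]²))` whose coordinate pairs are independent, each
distributed as the product of two uniform measures (so the two sequences of permutations are
independent, uniform, and independent of each other).  Then almost surely
`X_N/N² → 0` and `Y_N/N³ → 0` for the pair, i.e. almost every realization satisfies (C3). -/
theorem stmt19
    (P : Measure ((N : ℕ) → Equiv.Perm (Fin N × Fin N) × Equiv.Perm (Fin N × Fin N)))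
    (hP : IsProbabilityMeasure P)
    (hindep : ProbabilityTheory.iIndepFun
      (fun N (ω : (k : ℕ) → Equiv.Perm (Fin k × Fin k) × Equiv.Perm (Fin k × Fin k)) => ω N) P)
    (hlaw : ∀ N : ℕ, P.map (fun ω => ω N) =
      ((PMF.uniformOfFintype (Equiv.Perm (Fin N × Fin N))).toMeasure).prod
        ((PMF.uniformOfFintype (Equiv.Perm (Fin N × Fin N))).toMeasure)) :
    ∀ᵐ ω ∂P,
      Tendsto (fun N : ℕ => (Xcnt N (ω N).1 (ω N).2 : ℝ) / (N : ℝ) ^ 2) atTop (nhds 0) ∧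
      Tendsto (fun N : ℕ => (Ycnt N (ω N).1 (ω N).2 : ℝ) / (N : ℝ) ^ 3) atTop (nhds 0) :=
  stmt19_general P hlaw
end
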